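/- arXiv:2209.06210 — 8 statements merged into one kernel-verified Lean document; each statement's English description precedes it below -/
import Mathlib

section
/- Let C_f, C_g : ℕ → ℝ be monotone nondecreasing functions with C_f(0) = C_g(0) = 0 whose marginal costs M(j) := C(j) − C(j−1) (for j ≥ 1) are nonnegative and monotonically decreasing in j. If M_f(s_f + 1) ≤ M_g(s_g + 1) for some s_f, s_g ∈ ℕ, then C_f(s_f + s_g) ≤ C_f(s_f) + C_g(s_g). (Merging two resources' loads onto the resource with the smaller next marginal cost does not increase the total cost.) -/
open Finset

theorem sub_le_sub_of_antitone_increments {α : Type*} [AddCommGroup α] [PartialOrder α]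
    [IsOrderedAddMonoid α] {f g : ℕ → α} (hf : Antitone fun j => f (j + 1) - f j)
    (hg : Antitone fun j => g (j + 1) - g j) {a b n : ℕ}
    (hab : f (a + 1) - f a ≤ g (b + 1) - g b) (hn : n ≤ b) :
    f (a + n) - f a ≤ g n - g 0 := by
  calc f (a + n) - f a = ∑ i ∈ range n, (f (a + (i + 1)) - f (a + i)) :=
        (sum_range_sub (fun i => f (a + i)) n).symm
    _ ≤ ∑ i ∈ range n, (g (i + 1) - g i) := sum_le_sum fun i hi => ?_
    _ = g n - g 0 := sum_range_sub g n
  have hib : i ≤ b := (mem_range.mp hi).le.trans hn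
  calc f (a + (i + 1)) - f (a + i) ≤ f (a + 1) - f a := hf (Nat.le_add_right a i)
    _ ≤ g (b + 1) - g b := hab
    _ ≤ g (i + 1) - g i := hg hib

theorem merge_loads_decreasing_marginals_general
    (Cf Cg : ℕ → ℝ)
    (hg0 : Cg 0 = 0)
    (hf_dec : ∀ j : ℕ, Cf (j + 2) - Cf (j + 1) ≤ Cf (j + 1) - Cf j)
    (hg_dec : ∀ j : ℕ, Cg (j + 2) - Cg (j + 1) ≤ Cg (j + 1) - Cg j)
    (s_f s_g : ℕ)
    (h : Cf (s_f + 1) - Cf s_f ≤ Cg (s_g + 1) - Cg s_g) :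
    Cf (s_f + s_g) ≤ Cf s_f + Cg s_g := by
  have merge := sub_le_sub_of_antitone_increments (antitone_nat_of_succ_le hf_dec)
    (antitone_nat_of_succ_le hg_dec) h le_rfl
  rw [hg0, sub_zero] at merge
  exact sub_le_iff_le_add'.mp merge

/-- Merging two resources' loads onto the resource with the smaller next
marginal cost does not increase the total cost, when marginal costs are
nonnegative and monotonically decreasing. -/
theorem merge_loads_decreasing_marginals
    (Cf Cg : ℕ → ℝ) (hCf : Monotone Cf) (hCg : Monotone Cg)
    (hf0 : Cf 0 = 0) (hg0 : Cg 0 = 0)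
    (hf_nonneg : ∀ j : ℕ, 0 ≤ Cf (j + 1) - Cf j)
    (hg_nonneg : ∀ j : ℕ, 0 ≤ Cg (j + 1) - Cg j)
    (hf_dec : ∀ j : ℕ, Cf (j + 2) - Cf (j + 1) ≤ Cf (j + 1) - Cf j)
    (hg_dec : ∀ j : ℕ, Cg (j + 2) - Cg (j + 1) ≤ Cg (j + 1) - Cg j)
    (s_f s_g : ℕ)
    (h : Cf (s_f + 1) - Cf s_f ≤ Cg (s_g + 1) - Cg s_g) :
    Cf (s_f + s_g) ≤ Cf s_f + Cg s_g :=
  merge_loads_decreasing_marginals_general Cf Cg hg0 hf_dec hg_dec s_f s_g h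
end

section
/- Consider n resources with cost functions C_i : ℕ → ℝ satisfying C_i(0) = 0, nonnegative marginal costs, and decreasing marginal costs (M_i(j) ≥ M_i(j+1) for all j ≥ 1), and suppose there are no upper limits. Then for every T ∈ ℕ and every assignment x : {1,…,n} → ℕ with ∑_i x_i = T, the total cost satisfies ∑_i C_i(x_i) ≥ min_{k ∈ {1,…,n}} C_k(T). Consequently, the assignment that gives all T tasks to a resource k minimizing C_k(T) (and 0 tasks to every other resource) is an optimal schedule (theorem on the optimality of MarDecUn). -/
/-!
With decreasing marginal costs and `C 0 = 0`, the average cost `C x / x` is antitone in `x`,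
i.e. `x * C T ≤ T * C x` for `x ≤ T`. If `m ≤ C i T` for every resource `i` and `∑ x i = T`,
summing `x i * m ≤ x i * C i T ≤ T * C i (x i)` over `i` gives `T * m ≤ T * ∑ C i (x i)`.
-/

open Finset

section Increments

variable {C : ℕ → ℝ}

lemma mul_increment_le_of_antitone (h0 : C 0 = 0)
    (hC : Antitone fun j => C (j + 1) - C j) (x : ℕ) :
    (x : ℝ) * (C (x + 1) - C x) ≤ C x := by
  have hsum : ∑ j ∈ range x, (C (j + 1) - C j) = C x := by
    rw [sum_range_sub, h0, sub_zero]
  calc (x : ℝ) * (C (x + 1) - C x) = #(range x) • (C (x + 1) - C x) := by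
        rw [card_range, nsmul_eq_mul]
    _ ≤ ∑ j ∈ range x, (C (j + 1) - C j) :=
        card_nsmul_le_sum _ _ _ fun j hj => hC (mem_range.mp hj).le
    _ = C x := hsum

lemma sub_le_mul_increment_of_antitone (hC : Antitone fun j => C (j + 1) - C j)
    {x T : ℕ} (hx : x ≤ T) :
    C T - C x ≤ ((T : ℝ) - x) * (C (x + 1) - C x) := by
  calc C T - C x = ∑ j ∈ Ico x T, (C (j + 1) - C j) := (sum_Ico_sub C hx).symm
    _ ≤ #(Ico x T) • (C (x + 1) - C x) :=
        sum_le_card_nsmul _ _ _ fun j hj => hC (mem_Ico.mp hj).1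
    _ = ((T : ℝ) - x) * (C (x + 1) - C x) := by
        rw [Nat.card_Ico, nsmul_eq_mul, Nat.cast_sub hx]

lemma mul_le_mul_of_antitone_increments (h0 : C 0 = 0)
    (hC : Antitone fun j => C (j + 1) - C j) {x T : ℕ} (hx : x ≤ T) :
    (x : ℝ) * C T ≤ T * C x := by
  have hx' : (x : ℝ) ≤ T := by exact_mod_cast hx
  have hhead := mul_le_mul_of_nonneg_left (mul_increment_le_of_antitone h0 hC x)
    (sub_nonneg.mpr hx')
  have htail := mul_le_mul_of_nonneg_left (sub_le_mul_increment_of_antitone hC hx)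
    (Nat.cast_nonneg x)
  nlinarith

end Increments

lemma le_sum_of_antitone_increments {ι : Type*} [Fintype ι] [Nonempty ι] {C : ι → ℕ → ℝ}
    (h0 : ∀ i, C i 0 = 0) (hC : ∀ i, Antitone fun j => C i (j + 1) - C i j)
    {T : ℕ} {x : ι → ℕ} (hx : ∑ i, x i = T) {m : ℝ} (hm : ∀ i, m ≤ C i T) :
    m ≤ ∑ i, C i (x i) := by
  obtain rfl | hT := Nat.eq_zero_or_pos T
  · have hx0 : ∀ i, x i = 0 := fun i => sum_eq_zero_iff.mp hx i (mem_univ i)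
    simpa [hx0, h0] using hm (Classical.arbitrary ι)
  have hxT : ∀ i, x i ≤ T := fun i => hx ▸ single_le_sum (by simp) (mem_univ i)
  refine le_of_mul_le_mul_left ?_ (Nat.cast_pos.mpr hT)
  calc (T : ℝ) * m = ∑ i, (x i : ℝ) * m := by rw [← sum_mul, ← Nat.cast_sum, hx]
    _ ≤ ∑ i, (x i : ℝ) * C i T :=
        sum_le_sum fun i _ => mul_le_mul_of_nonneg_left (hm i) (Nat.cast_nonneg _)
    _ ≤ ∑ i, (T : ℝ) * C i (x i) :=
        sum_le_sum fun i _ => mul_le_mul_of_antitone_increments (h0 i) (hC i) (hxT i)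
    _ = T * ∑ i, C i (x i) := by rw [mul_sum]

theorem mardecun_optimal_general
    (n : ℕ) (hn : 1 ≤ n) (C : Fin n → ℕ → ℝ)
    (h0 : ∀ i, C i 0 = 0)
    (hdec : ∀ (i : Fin n) (j : ℕ), C i (j + 2) - C i (j + 1) ≤ C i (j + 1) - C i j) :
    (∀ (T : ℕ) (x : Fin n → ℕ), (∑ i, x i) = T →
      (Finset.univ.inf' ⟨⟨0, hn⟩, Finset.mem_univ _⟩ fun k => C k T) ≤ ∑ i, C i (x i)) ∧
    (∀ (T : ℕ) (k : Fin n), (∀ j, C k T ≤ C j T) →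
      ∀ x : Fin n → ℕ, (∑ i, x i) = T →
        (∑ i, C i (if i = k then T else 0)) ≤ ∑ i, C i (x i)) := by
  have hC : ∀ i, Antitone fun j => C i (j + 1) - C i j :=
    fun i => antitone_nat_of_succ_le (hdec i)
  have : Nonempty (Fin n) := ⟨⟨0, hn⟩⟩
  refine ⟨fun T x hx => le_sum_of_antitone_increments h0 hC hx
    fun i => inf'_le _ (mem_univ i), fun T k hk x hx => ?_⟩
  have hsingle : ∑ i, C i (if i = k then T else 0) = C k T := by
    simp only [apply_ite (C _), h0, sum_ite_eq', mem_univ, if_true]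
  exact hsingle ▸ le_sum_of_antitone_increments h0 hC hx hk

/-- Optimality of MarDecUn: with decreasing (and nonnegative) marginal costs
and no upper limits, any assignment of `T` tasks has total cost at least
`min_k C_k(T)`; consequently, giving all `T` tasks to a resource minimizing
`C_k(T)` is an optimal schedule. -/
theorem mardecun_optimal
    (n : ℕ) (hn : 1 ≤ n) (C : Fin n → ℕ → ℝ)
    (h0 : ∀ i, C i 0 = 0)
    (hnonneg : ∀ (i : Fin n) (j : ℕ), 0 ≤ C i (j + 1) - C i j)
    (hdec : ∀ (i : Fin n) (j : ℕ), C i (j + 2) - C i (j + 1) ≤ C i (j + 1) - C i j) :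
    (∀ (T : ℕ) (x : Fin n → ℕ), (∑ i, x i) = T →
      (Finset.univ.inf' ⟨⟨0, hn⟩, Finset.mem_univ _⟩ fun k => C k T) ≤ ∑ i, C i (x i)) ∧
    (∀ (T : ℕ) (k : Fin n), (∀ j, C k T ≤ C j T) →
      ∀ x : Fin n → ℕ, (∑ i, x i) = T →
        (∑ i, C i (if i = k then T else 0)) ≤ ∑ i, C i (x i)) :=
  mardecun_optimal_general n hn C h0 hdec
end

section
/- Consider n resources with cost functions C_i : ℕ → ℝ satisfying C_i(0) = 0, nonnegative marginal costs, and decreasing marginal costs (M_i(j) ≥ M_i(j+1) for all j ≥ 1), together with upper limits u_i ∈ ℕ. Let T ∈ ℕ with T ≤ ∑_i u_i. Then there exists an optimal assignment x (i.e., ∑_i x_i = T, x_i ≤ u_i for all i, and ∑_i C_i(x_i) minimal among all such assignments) in which at most one index i satisfies 0 < x_i < u_i; every other resource receives either 0 tasks or exactly u_i tasks. (Structural result underlying the optimality of MarDec.) -/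
/-!
Moving `k` tasks from resource `j` to resource `i` changes the cost by
`(C i (x i + k) - C i (x i)) - (C j (x j) - C j (x j - k))`, a sum of `k` terms each bounded by
the first one, because the marginal costs of `i` decrease along the way while those of `j`
increase. So if the first unit can be moved without loss, so can every further unit, until `i`
is full or `j` is empty; otherwise the first unit can be moved the other way. Applied to two
resources at intermediate load of an optimal assignment, this yields an optimal assignment with
fewer such resources.
-/

open Finset fwdDiff

section TwoResources

variable {f g : ℕ → ℝ}

lemma add_le_add_of_fwdDiff_le (hf : Antitone (Δ_[1] f)) (hg : Antitone (Δ_[1] g))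
    {p q r k : ℕ} (h : Δ_[1] f p ≤ Δ_[1] g r) (hk : q + k ≤ r + 1) :
    f (p + k) + g q ≤ f p + g (q + k) := by
  have telescope : ∀ (φ : ℕ → ℝ) (m : ℕ), φ (m + k) - φ m = ∑ t ∈ range k, Δ_[1] φ (m + t) := by
    intro φ m
    simpa [fwdDiff, add_assoc] using (sum_range_sub (fun t => φ (m + t)) k).symm
  have hterm : ∑ t ∈ range k, Δ_[1] f (p + t) ≤ ∑ t ∈ range k, Δ_[1] g (q + t) :=
    sum_le_sum fun t ht =>
      (hf (Nat.le_add_right p t)).trans (h.trans (hg (by rw [mem_range] at ht; omega)))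
  linarith [telescope f p, telescope g q]

lemma exists_transfer_le (hf : Antitone (Δ_[1] f)) (hg : Antitone (Δ_[1] g)) {a p q : ℕ}
    (hp : p ≤ a) (h : Δ_[1] f p ≤ Δ_[1] g q) :
    ∃ p' q', p' + q' = p + (q + 1) ∧ p' ≤ a ∧ q' ≤ q + 1 ∧
      f p' + g q' ≤ f p + g (q + 1) ∧ (p' = a ∨ q' = 0) := by
  set k := min (a - p) (q + 1)
  refine ⟨p + k, q + 1 - k, by omega, by omega, by omega, ?_, by omega⟩
  have hle := add_le_add_of_fwdDiff_le hf hg (q := q + 1 - k) (k := k) h (by omega)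
  rwa [Nat.sub_add_cancel (by omega)] at hle

lemma exists_boundary_le (hf : Antitone (Δ_[1] f)) (hg : Antitone (Δ_[1] g)) {a b p q : ℕ}
    (hp : p ≤ a) (hq : q ≤ b) :
    ∃ p' q', p' + q' = p + q ∧ p' ≤ a ∧ q' ≤ b ∧ f p' + g q' ≤ f p + g q ∧
      (p' = 0 ∨ p' = a ∨ q' = 0 ∨ q' = b) := by
  cases p with
  | zero => exact ⟨0, q, rfl, hp, hq, le_rfl, Or.inl rfl⟩
  | succ p =>
  cases q with
  | zero => exact ⟨p + 1, 0, rfl, hp, hq, le_rfl, Or.inr (Or.inr (Or.inl rfl))⟩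
  | succ q =>
  rcases le_or_gt (Δ_[1] f (p + 1)) (Δ_[1] g q) with h | h
  · obtain ⟨p', q', hsum, hpa, hq', hcost, hend⟩ := exists_transfer_le hf hg hp h
    exact ⟨p', q', hsum, hpa, hq'.trans hq, hcost, by omega⟩
  · have h' : Δ_[1] g (q + 1) ≤ Δ_[1] f p :=
      (hg q.le_succ).trans (h.le.trans (hf p.le_succ))
    obtain ⟨q', p', hsum, hqb, hp', hcost, hend⟩ := exists_transfer_le hg hf hq h'
    exact ⟨p', q', by omega, hp'.trans hp, hqb, by linarith, by omega⟩

end TwoResources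

section Assignments

variable {ι : Type*} [Fintype ι]

def partiallyFilled (u x : ι → ℕ) : Finset ι :=
  univ.filter fun i => 0 < x i ∧ x i < u i

@[simp]
lemma mem_partiallyFilled {u x : ι → ℕ} {i : ι} :
    i ∈ partiallyFilled u x ↔ 0 < x i ∧ x i < u i := by
  simp [partiallyFilled]

variable [DecidableEq ι]

lemma sum_add_eq_sum_add_of_eq_of_ne {M : Type*} [AddCommMonoid M] {f g : ι → M} {i j : ι}
    (hij : i ≠ j) (h : ∀ k, k ≠ i → k ≠ j → f k = g k) :
    ∑ k, f k + (g i + g j) = ∑ k, g k + (f i + f j) := by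
  have split : ∀ φ : ι → M, ∑ k, φ k = φ i + φ j + ∑ k ∈ (univ.erase i).erase j, φ k := by
    intro φ
    rw [← add_sum_erase _ φ (mem_univ i),
      ← add_sum_erase _ φ (mem_erase.mpr ⟨hij.symm, mem_univ j⟩), add_assoc]
  have rest : ∑ k ∈ (univ.erase i).erase j, f k = ∑ k ∈ (univ.erase i).erase j, g k :=
    sum_congr rfl fun k hk => by
      simp only [mem_erase] at hk
      exact h k hk.2.1 hk.1
  rw [split f, split g, rest]
  abel

lemma exists_card_partiallyFilled_lt {C : ι → ℕ → ℝ} (hC : ∀ i, Antitone (Δ_[1] (C i)))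
    {u x : ι → ℕ} (hx : ∀ i, x i ≤ u i) (h : 1 < #(partiallyFilled u x)) :
    ∃ x' : ι → ℕ, ∑ i, x' i = ∑ i, x i ∧ (∀ i, x' i ≤ u i) ∧
      ∑ i, C i (x' i) ≤ ∑ i, C i (x i) ∧ #(partiallyFilled u x') < #(partiallyFilled u x) := by
  obtain ⟨i, hiS, j, hjS, hij⟩ := one_lt_card.mp h
  obtain ⟨p, q, hsum, hpu, hqu, hcost, hend⟩ := exists_boundary_le (hC i) (hC j) (hx i) (hx j)
  set x' := Function.update (Function.update x i p) j q
  have hx'i : x' i = p := by simp [x', hij]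
  have hx'j : x' j = q := by simp [x']
  have hx'k : ∀ k, k ≠ i → k ≠ j → x' k = x k := fun k hki hkj => by simp [x', hki, hkj]
  refine ⟨x', ?_, fun k => ?_, ?_, card_lt_card ⟨fun k hk => ?_, fun hsup => ?_⟩⟩
  · have := sum_add_eq_sum_add_of_eq_of_ne hij hx'k
    rw [hx'i, hx'j] at this
    omega
  · by_cases hki : k = i
    · rwa [hki, hx'i]
    by_cases hkj : k = j
    · rwa [hkj, hx'j]
    rw [hx'k k hki hkj]
    exact hx k
  · have := sum_add_eq_sum_add_of_eq_of_ne (f := fun k => C k (x' k)) (g := fun k => C k (x k))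
      hij fun k hki hkj => by rw [hx'k k hki hkj]
    simp only [hx'i, hx'j] at this
    linarith
  · rw [mem_partiallyFilled] at hk ⊢
    by_cases hki : k = i
    · rwa [hki, ← mem_partiallyFilled]
    by_cases hkj : k = j
    · rwa [hkj, ← mem_partiallyFilled]
    rwa [← hx'k k hki hkj]
  · have hi := hsup hiS
    have hj := hsup hjS
    simp only [mem_partiallyFilled, hx'i, hx'j] at hi hj
    omega

lemma exists_le_card_partiallyFilled_le_one {C : ι → ℕ → ℝ}
    (hC : ∀ i, Antitone (Δ_[1] (C i))) {u y : ι → ℕ} (hy : ∀ i, y i ≤ u i) :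
    ∃ x : ι → ℕ, ∑ i, x i = ∑ i, y i ∧ (∀ i, x i ≤ u i) ∧
      ∑ i, C i (x i) ≤ ∑ i, C i (y i) ∧ #(partiallyFilled u x) ≤ 1 := by
  induction hc : #(partiallyFilled u y) using Nat.strong_induction_on generalizing y with
  | _ c ih =>
  rcases le_or_gt c 1 with hc1 | hc1
  · exact ⟨y, rfl, hy, le_rfl, hc ▸ hc1⟩
  obtain ⟨y', hsum, hy'u, hcost, hlt⟩ := exists_card_partiallyFilled_lt hC hy (hc ▸ hc1)
  obtain ⟨x, hsum', hxu, hcost', hcard⟩ := ih _ (hc ▸ hlt) hy'u rfl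
  exact ⟨x, hsum'.trans hsum, hxu, hcost'.trans hcost, hcard⟩

lemma exists_sum_eq_of_le_sum {u : ι → ℕ} {T : ℕ} (hT : T ≤ ∑ i, u i) :
    ∃ x : ι → ℕ, ∑ i, x i = T ∧ ∀ i, x i ≤ u i := by
  induction T with
  | zero => exact ⟨0, by simp, fun i => Nat.zero_le _⟩
  | succ T ih =>
  obtain ⟨x, hsum, hxu⟩ := ih (by omega)
  obtain ⟨i, -, hi⟩ := exists_lt_of_sum_lt (s := univ) (f := x) (g := u) (by omega)
  refine ⟨x + Pi.single i 1, by simp [sum_add_distrib, hsum], fun k => ?_⟩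
  by_cases hki : k = i
  · subst hki; simpa using hi
  · simpa [hki] using hxu k

lemma exists_optimal_assignment (C : ι → ℕ → ℝ) {u : ι → ℕ} {T : ℕ} (hT : T ≤ ∑ i, u i) :
    ∃ x : ι → ℕ, ∑ i, x i = T ∧ (∀ i, x i ≤ u i) ∧
      ∀ y : ι → ℕ, ∑ i, y i = T → (∀ i, y i ≤ u i) → ∑ i, C i (x i) ≤ ∑ i, C i (y i) := by
  set F := (Fintype.piFinset fun i => range (u i + 1)).filter fun x => ∑ i, x i = T
  have hF : ∀ x, x ∈ F ↔ ∑ i, x i = T ∧ ∀ i, x i ≤ u i := fun x => by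
    simp [F, Fintype.mem_piFinset, and_comm]
  obtain ⟨x₀, hx₀, hx₀u⟩ := exists_sum_eq_of_le_sum hT
  obtain ⟨x, hxF, hmin⟩ :=
    exists_min_image F (fun x => ∑ i, C i (x i)) ⟨x₀, (hF x₀).mpr ⟨hx₀, hx₀u⟩⟩
  exact ⟨x, ((hF x).mp hxF).1, ((hF x).mp hxF).2,
    fun y hy hyu => hmin y ((hF y).mpr ⟨hy, hyu⟩)⟩

end Assignments

theorem mardec_structure_general
    (n : ℕ) (C : Fin n → ℕ → ℝ)
    (hdec : ∀ (i : Fin n) (j : ℕ), C i (j + 2) - C i (j + 1) ≤ C i (j + 1) - C i j)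
    (u : Fin n → ℕ) (T : ℕ) (hT : T ≤ ∑ i, u i) :
    ∃ x : Fin n → ℕ,
      (∑ i, x i) = T ∧
      (∀ i, x i ≤ u i) ∧
      (∀ y : Fin n → ℕ, (∑ i, y i) = T → (∀ i, y i ≤ u i) →
        (∑ i, C i (x i)) ≤ ∑ i, C i (y i)) ∧
      (∀ i j : Fin n, 0 < x i → x i < u i → 0 < x j → x j < u j → i = j) := by
  have hC : ∀ i, Antitone (Δ_[1] (C i)) := fun i => antitone_nat_of_succ_le (hdec i)
  obtain ⟨y, hyT, hyu, hyopt⟩ := exists_optimal_assignment C hT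
  obtain ⟨x, hxy, hxu, hcost, hcard⟩ := exists_le_card_partiallyFilled_le_one hC hyu
  refine ⟨x, hxy.trans hyT, hxu, fun z hz hzu => hcost.trans (hyopt z hz hzu), ?_⟩
  intro i j hi hi' hj hj'
  exact card_le_one.mp hcard i (mem_partiallyFilled.mpr ⟨hi, hi'⟩)
    j (mem_partiallyFilled.mpr ⟨hj, hj'⟩)

/-- Structural result underlying the optimality of MarDec: with nonnegative and
decreasing marginal costs and upper limits `u`, if `T ≤ ∑ u_i` then there is an
optimal assignment in which at most one resource is at intermediary capacity
(every other resource receives 0 or exactly `u_i` tasks). -/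
theorem mardec_structure
    (n : ℕ) (hn : 1 ≤ n) (C : Fin n → ℕ → ℝ)
    (h0 : ∀ i, C i 0 = 0)
    (hnonneg : ∀ (i : Fin n) (j : ℕ), 0 ≤ C i (j + 1) - C i j)
    (hdec : ∀ (i : Fin n) (j : ℕ), C i (j + 2) - C i (j + 1) ≤ C i (j + 1) - C i j)
    (u : Fin n → ℕ) (T : ℕ) (hT : T ≤ ∑ i, u i) :
    ∃ x : Fin n → ℕ,
      (∑ i, x i) = T ∧
      (∀ i, x i ≤ u i) ∧
      (∀ y : Fin n → ℕ, (∑ i, y i) = T → (∀ i, y i ≤ u i) →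
        (∑ i, C i (x i)) ≤ ∑ i, C i (y i)) ∧
      (∀ i j : Fin n, 0 < x i → x i < u i → 0 < x j → x j < u j → i = j) :=
  mardec_structure_general n C hdec u T hT
end

section
/- Consider n resources with cost functions C_i : ℕ → ℝ satisfying C_i(0) = 0, nonnegative marginal costs, and increasing marginal costs (M_i(j) ≤ M_i(j+1) for all j ≥ 1), together with upper limits u_i ∈ ℕ. Let t ∈ ℕ with t < ∑_i u_i, and let x be an optimal assignment for t tasks (∑_i x_i = t, x_i ≤ u_i for all i, total cost minimal). Let k be any index with x_k < u_k that minimizes M_i(x_i + 1) = C_i(x_i + 1) − C_i(x_i) over all i with x_i < u_i. Then the assignment x' obtained from x by setting x'_k = x_k + 1 (and x'_i = x_i for i ≠ k) is an optimal assignment for t + 1 tasks. (Inductive step of the greedy algorithm MarIn.) -/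
/-!
Exchange argument. A feasible `y` for `t + 1` tasks exceeds `x` on some resource `j`; removing
one task from `j` leaves an assignment for `t` tasks, which costs at least as much as `x`. So `y`
costs at least `cost x + M_j(y_j)`, and `M_j(y_j) ≥ M_j(x_j + 1) ≥ M_k(x_k + 1)` by increasing
marginal costs and the choice of `k` (note `x_j < y_j ≤ u_j`). The right-hand side is the cost
of the greedy extension of `x`.
-/

open Finset Function

theorem sum_apply_update_add {ι α M : Type*} [Fintype ι] [DecidableEq ι] [AddCommMonoid M]
    (f : ι → α → M) (x : ι → α) (k : ι) (v : α) :
    ∑ i, f i (update x k v i) + f k (x k) = ∑ i, f i (x i) + f k v := by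
  rw [← add_sum_erase _ _ (mem_univ k), ← add_sum_erase _ (fun i => f i (x i)) (mem_univ k),
    sum_congr rfl fun i hi => by rw [update_of_ne (ne_of_mem_erase hi)], update_self]
  abel

theorem monotone_marginal {f : ℕ → ℝ} (hf : ∀ j, f (j + 1) - f j ≤ f (j + 2) - f (j + 1)) :
    Monotone fun j => f (j + 1) - f j :=
  monotone_nat_of_le_succ hf

theorem exists_cost_add_marginal_le {ι : Type*} [Fintype ι] [DecidableEq ι]
    (C : ι → ℕ → ℝ) (hinc : ∀ i j, C i (j + 1) - C i j ≤ C i (j + 2) - C i (j + 1))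
    {u x : ι → ℕ}
    (hxopt : ∀ y : ι → ℕ, ∑ i, y i = ∑ i, x i → y ≤ u → ∑ i, C i (x i) ≤ ∑ i, C i (y i))
    {y : ι → ℕ} (hy : ∑ i, y i = ∑ i, x i + 1) (hyu : y ≤ u) :
    ∃ j, x j < u j ∧ ∑ i, C i (x i) + (C j (x j + 1) - C j (x j)) ≤ ∑ i, C i (y i) := by
  obtain ⟨j, -, hj⟩ := exists_lt_of_sum_lt (hy ▸ Nat.lt_succ_self _ : ∑ i, x i < ∑ i, y i)
  obtain ⟨m, hm⟩ : ∃ m, y j = m + 1 := ⟨y j - 1, by omega⟩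
  have hcard := sum_apply_update_add (fun _ v => v) y j m
  have hcost := sum_apply_update_add C y j m
  have hopt := hxopt (update y j m) (by omega)
    (update_le_iff.2 ⟨by have : y j ≤ u j := hyu j; omega, fun i _ => hyu i⟩)
  have hmarg := monotone_marginal (hinc j) (show x j ≤ m by omega)
  refine ⟨j, hj.trans_le (hyu j), ?_⟩
  rw [hm] at hcost
  linarith

theorem marin_inductive_step_general
    (n : ℕ) (C : Fin n → ℕ → ℝ)
    (hinc : ∀ (i : Fin n) (j : ℕ), C i (j + 1) - C i j ≤ C i (j + 2) - C i (j + 1))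
    (u : Fin n → ℕ) (t : ℕ)
    (x : Fin n → ℕ) (hxsum : (∑ i, x i) = t) (hxu : ∀ i, x i ≤ u i)
    (hxopt : ∀ y : Fin n → ℕ, (∑ i, y i) = t → (∀ i, y i ≤ u i) →
      (∑ i, C i (x i)) ≤ ∑ i, C i (y i))
    (k : Fin n) (hk : x k < u k)
    (hkmin : ∀ i : Fin n, x i < u i →
      C k (x k + 1) - C k (x k) ≤ C i (x i + 1) - C i (x i)) :
    (∑ i, Function.update x k (x k + 1) i) = t + 1 ∧
    (∀ i, Function.update x k (x k + 1) i ≤ u i) ∧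
    (∀ y : Fin n → ℕ, (∑ i, y i) = t + 1 → (∀ i, y i ≤ u i) →
      (∑ i, C i (Function.update x k (x k + 1) i)) ≤ ∑ i, C i (y i)) := by
  subst hxsum
  have hcard := sum_apply_update_add (fun _ v => v) x k (x k + 1)
  refine ⟨by omega, update_le_iff.2 ⟨hk, fun i _ => hxu i⟩, fun y hy hyu => ?_⟩
  obtain ⟨j, hju, hj⟩ := exists_cost_add_marginal_le C hinc hxopt hy hyu
  have hcost := sum_apply_update_add C x k (x k + 1)
  linarith [hkmin j hju]

/-- Inductive step of the greedy algorithm MarIn: with nonnegative and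
increasing marginal costs, if `x` is an optimal assignment for `t < ∑ u_i`
tasks and `k` minimizes the next marginal cost among resources below their
upper limit, then assigning one more task to `k` gives an optimal assignment
for `t + 1` tasks. -/
theorem marin_inductive_step
    (n : ℕ) (hn : 1 ≤ n) (C : Fin n → ℕ → ℝ)
    (h0 : ∀ i, C i 0 = 0)
    (hnonneg : ∀ (i : Fin n) (j : ℕ), 0 ≤ C i (j + 1) - C i j)
    (hinc : ∀ (i : Fin n) (j : ℕ), C i (j + 1) - C i j ≤ C i (j + 2) - C i (j + 1))
    (u : Fin n → ℕ) (t : ℕ) (ht : t < ∑ i, u i)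
    (x : Fin n → ℕ) (hxsum : (∑ i, x i) = t) (hxu : ∀ i, x i ≤ u i)
    (hxopt : ∀ y : Fin n → ℕ, (∑ i, y i) = t → (∀ i, y i ≤ u i) →
      (∑ i, C i (x i)) ≤ ∑ i, C i (y i))
    (k : Fin n) (hk : x k < u k)
    (hkmin : ∀ i : Fin n, x i < u i →
      C k (x k + 1) - C k (x k) ≤ C i (x i + 1) - C i (x i)) :
    (∑ i, Function.update x k (x k + 1) i) = t + 1 ∧
    (∀ i, Function.update x k (x k + 1) i ≤ u i) ∧
    (∀ y : Fin n → ℕ, (∑ i, y i) = t + 1 → (∀ i, y i ≤ u i) →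
      (∑ i, C i (Function.update x k (x k + 1) i)) ≤ ∑ i, C i (y i)) :=
  marin_inductive_step_general n C hinc u t x hxsum hxu hxopt k hk hkmin
end

section
/- Consider n resources with cost functions C_i : ℕ → ℝ satisfying C_i(0) = 0, nonnegative marginal costs, and increasing marginal costs (M_i(j) ≤ M_i(j+1) for all j ≥ 1), together with upper limits u_i ∈ ℕ. Let T ∈ ℕ with T ≤ ∑_i u_i, and let x be an assignment feasible for T tasks (∑_i x_i = T, x_i ≤ u_i) such that every used marginal cost is at most every unused marginal cost: for all i with x_i < u_i and all j with x_j ≥ 1, one has M_j(x_j) ≤ M_i(x_i + 1). Then x is an optimal assignment for T tasks. (This is the property through which the greedy schedule built by MarIn, which always assigns the next task to a resource of minimal marginal cost, is shown optimal.) -/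
/-!
Discrete convexity gives every resource a supporting line: any slope `c` lying between the last
used and the first unused marginal cost satisfies `C i (x i) + c * (m - x i) ≤ C i m` for all
`m ≤ u i`. The greedy condition says exactly that one slope `c` works for all resources at once,
and summing these inequalities over `i` for another assignment `y` with the same total makes the
linear terms cancel.
-/

open Finset

namespace Finset

theorem exists_forall_le_and_forall_ge {ι α : Type*} [LinearOrder α] [Nonempty α]
    {s t : Finset ι} {f g : ι → α} (h : ∀ i ∈ s, ∀ j ∈ t, f i ≤ g j) :
    ∃ c, (∀ i ∈ s, f i ≤ c) ∧ ∀ j ∈ t, c ≤ g j := by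
  rcases s.eq_empty_or_nonempty with rfl | hs
  · obtain ⟨c, hc⟩ := (t.image g).bddBelow
    exact ⟨c, by simp, fun j hj => hc (mem_image_of_mem g hj)⟩
  · obtain ⟨i₀, hi₀, hmax⟩ := s.exists_max_image f hs
    exact ⟨f i₀, hmax, h i₀ hi₀⟩

end Finset

section IncreasingIncrements

variable {f : ℕ → ℝ} (hf : Monotone fun j => f (j + 1) - f j)
include hf

theorem mul_increment_le_sub {a m : ℕ} (ham : a ≤ m) :
    ((m : ℝ) - a) * (f (a + 1) - f a) ≤ f m - f a := by
  rw [← sum_Ico_sub f ham, ← Nat.cast_sub ham, ← Nat.card_Ico a m, ← nsmul_eq_mul]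
  exact card_nsmul_le_sum _ _ _ fun k hk => hf (mem_Ico.mp hk).1

theorem sub_le_mul_increment {m a : ℕ} (hma : m ≤ a) :
    f a - f m ≤ ((a : ℝ) - m) * (f a - f (a - 1)) := by
  rw [← sum_Ico_sub f hma, ← Nat.cast_sub hma, ← Nat.card_Ico m a, ← nsmul_eq_mul]
  refine sum_le_card_nsmul _ _ _ fun k hk => ?_
  have hka : k < a := (mem_Ico.mp hk).2
  simpa [Nat.sub_add_cancel (Nat.one_le_of_lt hka)] using hf (Nat.le_sub_one_of_lt hka)

theorem add_mul_sub_le_of_increment_bounds {a b m : ℕ} {c : ℝ} (hmb : m ≤ b)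
    (hbelow : 1 ≤ a → f a - f (a - 1) ≤ c) (habove : a < b → c ≤ f (a + 1) - f a) :
    f a + c * ((m : ℝ) - a) ≤ f m := by
  rcases lt_or_ge m a with hma | ham
  · have hmul := mul_le_mul_of_nonneg_left (hbelow (Nat.one_le_of_lt hma))
      (sub_nonneg.mpr (Nat.cast_le.mpr hma.le) : (0 : ℝ) ≤ a - m)
    linarith [sub_le_mul_increment hf hma.le]
  · rcases ham.eq_or_lt with rfl | ham
    · simp
    · have hmul := mul_le_mul_of_nonneg_left (habove (ham.trans_le hmb))
        (sub_nonneg.mpr (Nat.cast_le.mpr ham.le) : (0 : ℝ) ≤ m - a)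
      linarith [mul_increment_le_sub hf ham.le]

end IncreasingIncrements

theorem sum_le_sum_of_add_mul_sub_le {ι : Type*} {s : Finset ι} {F : ι → ℕ → ℝ} {x y : ι → ℕ}
    {c : ℝ} (hsum : ∑ i ∈ s, x i = ∑ i ∈ s, y i)
    (h : ∀ i ∈ s, F i (x i) + c * ((y i : ℝ) - x i) ≤ F i (y i)) :
    ∑ i ∈ s, F i (x i) ≤ ∑ i ∈ s, F i (y i) :=
  calc ∑ i ∈ s, F i (x i) = ∑ i ∈ s, (F i (x i) + c * ((y i : ℝ) - x i)) := by
        rw [sum_add_distrib, ← mul_sum, sum_sub_distrib, ← Nat.cast_sum, ← Nat.cast_sum, hsum,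
          sub_self, mul_zero, add_zero]
    _ ≤ ∑ i ∈ s, F i (y i) := sum_le_sum h

theorem marin_greedy_optimal_general
    (n : ℕ) (C : Fin n → ℕ → ℝ)
    (hinc : ∀ (i : Fin n) (j : ℕ), C i (j + 1) - C i j ≤ C i (j + 2) - C i (j + 1))
    (u : Fin n → ℕ) (T : ℕ)
    (x : Fin n → ℕ) (hxsum : (∑ i, x i) = T)
    (hgreedy : ∀ i : Fin n, x i < u i → ∀ j : Fin n, 1 ≤ x j →
      C j (x j) - C j (x j - 1) ≤ C i (x i + 1) - C i (x i)) :
    ∀ y : Fin n → ℕ, (∑ i, y i) = T → (∀ i, y i ≤ u i) →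
      (∑ i, C i (x i)) ≤ ∑ i, C i (y i) := by
  intro y hysum hyu
  obtain ⟨c, hused, hunused⟩ := exists_forall_le_and_forall_ge
    (s := {j | 1 ≤ x j}) (t := {i | x i < u i})
    (f := fun j => C j (x j) - C j (x j - 1)) (g := fun i => C i (x i + 1) - C i (x i))
    (by simpa using fun j hj i hi => hgreedy i hi j hj)
  refine sum_le_sum_of_add_mul_sub_le (c := c) (hxsum.trans hysum.symm) fun i _ => ?_
  exact add_mul_sub_le_of_increment_bounds (monotone_nat_of_le_succ (hinc i)) (hyu i)
    (fun h => hused i (by simpa using h)) (fun h => hunused i (by simpa using h))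

/-- Optimality of the greedy schedule built by MarIn: with nonnegative and
increasing marginal costs and upper limits, a feasible assignment for `T`
tasks in which every used marginal cost is at most every unused marginal cost
is optimal. -/
theorem marin_greedy_optimal
    (n : ℕ) (hn : 1 ≤ n) (C : Fin n → ℕ → ℝ)
    (h0 : ∀ i, C i 0 = 0)
    (hnonneg : ∀ (i : Fin n) (j : ℕ), 0 ≤ C i (j + 1) - C i j)
    (hinc : ∀ (i : Fin n) (j : ℕ), C i (j + 1) - C i j ≤ C i (j + 2) - C i (j + 1))
    (u : Fin n → ℕ) (T : ℕ) (hT : T ≤ ∑ i, u i)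
    (x : Fin n → ℕ) (hxsum : (∑ i, x i) = T) (hxu : ∀ i, x i ≤ u i)
    (hgreedy : ∀ i : Fin n, x i < u i → ∀ j : Fin n, 1 ≤ x j →
      C j (x j) - C j (x j - 1) ≤ C i (x i + 1) - C i (x i)) :
    ∀ y : Fin n → ℕ, (∑ i, y i) = T → (∀ i, y i ≤ u i) →
      (∑ i, C i (x i)) ≤ ∑ i, C i (y i) :=
  marin_greedy_optimal_general n C hinc u T x hxsum hgreedy
end

section
/- Consider n resources with linear cost functions C_i(j) = a_i · j where a_i ≥ 0 (constant marginal costs), together with upper limits u_i ∈ ℕ, and let T ∈ ℕ with T ≤ ∑_i u_i. Let t < T and let x be an optimal assignment for t tasks (∑_i x_i = t, x_i ≤ u_i, total cost ∑_i a_i x_i minimal). Suppose k is an index with x_k = 0 such that a_k ≤ a_i for every i with x_i < u_i, and set a := min(u_k, T − t). Then the assignment x' obtained from x by setting x'_k = a (and x'_i = x_i for i ≠ k) is an optimal assignment for t + a tasks. (Inductive step of the algorithm MarCo.) -/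
/-!
Let `y` be feasible for `t + m`, where `m = min (u k) (T - t)`. Every resource with rate below
`a k` is saturated in `x`, so `y` puts at most `t` tasks on those; hence at least `m` of its tasks
sit on resources of rate `≥ a k`. Removing `m` of them leaves an assignment for `t` tasks, which
costs at least as much as `x`, while the removed tasks cost at least `a k * m`. So `y` costs at
least `cost x + a k * m`, the cost of the new assignment.
-/

open Finset

theorem Function.update_eq_add_single {ι M : Type*} [DecidableEq ι] [AddZeroClass M]
    {f : ι → M} {k : ι} (hk : f k = 0) (b : M) :
    Function.update f k b = f + Pi.single k b := by
  ext i
  rcases eq_or_ne i k with rfl | hik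
  · simp [hk]
  · simp [hik]

theorem Finset.exists_le_sum_eq_of_le_sum {ι : Type*} {s : Finset ι} {w : ι → ℕ} {m : ℕ}
    (hm : m ≤ ∑ i ∈ s, w i) : ∃ d ≤ w, ∑ i ∈ s, d i = m := by
  classical
  induction s using Finset.induction_on generalizing m with
  | empty => exact ⟨0, fun _ => Nat.zero_le _, by simpa using (Nat.le_zero.1 hm).symm⟩
  | insert j s hj ih =>
    rw [sum_insert hj] at hm
    obtain ⟨d, hdw, hds⟩ := ih (m := m - min m (w j)) (by omega)
    refine ⟨Function.update d j (min m (w j)), fun i => ?_, ?_⟩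
    · rcases eq_or_ne i j with rfl | hij
      · simp
      · simpa [hij] using hdw i
    · rw [sum_insert hj, Function.update_self,
        sum_congr rfl fun i hi => Function.update_of_ne (ne_of_mem_of_not_mem hi hj) _ _, hds]
      omega

section LinearCost

variable {ι : Type*} [Fintype ι]

def linearCost (a : ι → ℝ) (x : ι → ℕ) : ℝ := ∑ i, a i * x i

theorem linearCost_update_of_eq_zero [DecidableEq ι] (a : ι → ℝ) {x : ι → ℕ} {k : ι}
    (hk : x k = 0) (b : ℕ) : linearCost a (Function.update x k b) = linearCost a x + a k * b := by
  simp [linearCost, Function.update_eq_add_single hk, mul_add, sum_add_distrib, Pi.single_apply]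

theorem linearCost_add_le_of_saturated_below {a : ι → ℝ} {u x y : ι → ℕ} {t m : ℕ} {c : ℝ}
    (hxsum : ∑ i, x i = t)
    (hxopt : ∀ z : ι → ℕ, ∑ i, z i = t → z ≤ u → linearCost a x ≤ linearCost a z)
    (hsat : ∀ i, a i < c → x i = u i) (hysum : ∑ i, y i = t + m) (hyu : y ≤ u) :
    linearCost a x + c * m ≤ linearCost a y := by
  classical
  have hcheap : ∑ i with a i < c, y i ≤ t :=
    calc ∑ i with a i < c, y i
        ≤ ∑ i with a i < c, x i := sum_le_sum fun i hi => (hsat i (mem_filter.1 hi).2) ▸ hyu i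
      _ ≤ ∑ i, x i := sum_le_sum_of_subset (subset_univ _)
      _ = t := hxsum
  -- `d` is the batch of `m` tasks removed from `y`, taken only from resources of rate `≥ c`
  obtain ⟨d, hdw, hdsum⟩ := exists_le_sum_eq_of_le_sum
    (s := univ) (w := fun i => if a i < c then 0 else y i) (m := m) (by
      have := sum_filter_add_sum_filter_not univ (fun i => a i < c) y
      rw [sum_ite, sum_const_zero, zero_add]
      omega)
  have hdy : d ≤ y := fun i => (hdw i).trans (by dsimp only; split_ifs <;> simp)
  have hd_cheap : ∀ i, a i < c → d i = 0 := fun i hi => by simpa [hi] using hdw i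
  have hzsum : ∑ i, (y - d) i = t := by
    have : ∑ i, (y - d) i + ∑ i, d i = ∑ i, y i := by
      rw [← sum_add_distrib]
      exact sum_congr rfl fun i _ => Nat.sub_add_cancel (hdy i)
    omega
  have hdcost : c * m ≤ ∑ i, a i * d i := by
    rw [← hdsum, Nat.cast_sum, mul_sum]
    refine sum_le_sum fun i _ => ?_
    by_cases hi : a i < c
    · simp [hd_cheap i hi]
    · exact mul_le_mul_of_nonneg_right (not_lt.1 hi) (Nat.cast_nonneg _)
  have hysplit : linearCost a y = linearCost a (y - d) + ∑ i, a i * d i := by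
    simp only [linearCost, ← sum_add_distrib, ← mul_add]
    refine sum_congr rfl fun i _ => ?_
    rw [Pi.sub_apply, Nat.cast_sub (hdy i), sub_add_cancel]
  linarith [hxopt (y - d) hzsum ((tsub_le_self).trans hyu)]

end LinearCost

theorem marco_inductive_step_general
    (n : ℕ) (a : Fin n → ℝ)
    (u : Fin n → ℕ) (T : ℕ)
    (t : ℕ)
    (x : Fin n → ℕ) (hxsum : (∑ i, x i) = t) (hxu : ∀ i, x i ≤ u i)
    (hxopt : ∀ y : Fin n → ℕ, (∑ i, y i) = t → (∀ i, y i ≤ u i) →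
      (∑ i, a i * (x i : ℝ)) ≤ ∑ i, a i * (y i : ℝ))
    (k : Fin n) (hk0 : x k = 0)
    (hkmin : ∀ i : Fin n, x i < u i → a k ≤ a i) :
    (∑ i, Function.update x k (min (u k) (T - t)) i) = t + min (u k) (T - t) ∧
    (∀ i, Function.update x k (min (u k) (T - t)) i ≤ u i) ∧
    (∀ y : Fin n → ℕ, (∑ i, y i) = t + min (u k) (T - t) → (∀ i, y i ≤ u i) →
      (∑ i, a i * (Function.update x k (min (u k) (T - t)) i : ℝ)) ≤
        ∑ i, a i * (y i : ℝ)) := by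
  set m := min (u k) (T - t)
  have hsat : ∀ i, a i < a k → x i = u i := fun i hi =>
    (hxu i).eq_of_not_lt fun hlt => (hkmin i hlt).not_gt hi
  refine ⟨?_, fun i => ?_, fun y hysum hyu => ?_⟩
  · simp [Function.update_eq_add_single hk0, sum_add_distrib, hxsum]
  · rcases eq_or_ne i k with rfl | hik
    · simp [m]
    · simpa [hik] using hxu i
  · calc linearCost a (Function.update x k m)
        = linearCost a x + a k * m := linearCost_update_of_eq_zero a hk0 m
      _ ≤ linearCost a y := linearCost_add_le_of_saturated_below hxsum hxopt hsat hysum hyu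

/-- Inductive step of the algorithm MarCo: with linear (constant-marginal)
costs `C_i(j) = a_i · j`, if `x` is optimal for `t < T` tasks and `k` is an
unused resource of minimal rate among the non-saturated resources, then
assigning `min (u_k) (T − t)` tasks to `k` gives an optimal assignment for
`t + min (u_k) (T − t)` tasks. -/
theorem marco_inductive_step
    (n : ℕ) (hn : 1 ≤ n) (a : Fin n → ℝ) (ha : ∀ i, 0 ≤ a i)
    (u : Fin n → ℕ) (T : ℕ) (hT : T ≤ ∑ i, u i)
    (t : ℕ) (ht : t < T)
    (x : Fin n → ℕ) (hxsum : (∑ i, x i) = t) (hxu : ∀ i, x i ≤ u i)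
    (hxopt : ∀ y : Fin n → ℕ, (∑ i, y i) = t → (∀ i, y i ≤ u i) →
      (∑ i, a i * (x i : ℝ)) ≤ ∑ i, a i * (y i : ℝ))
    (k : Fin n) (hk0 : x k = 0)
    (hkmin : ∀ i : Fin n, x i < u i → a k ≤ a i) :
    (∑ i, Function.update x k (min (u k) (T - t)) i) = t + min (u k) (T - t) ∧
    (∀ i, Function.update x k (min (u k) (T - t)) i ≤ u i) ∧
    (∀ y : Fin n → ℕ, (∑ i, y i) = t + min (u k) (T - t) → (∀ i, y i ≤ u i) →
      (∑ i, a i * (Function.update x k (min (u k) (T - t)) i : ℝ)) ≤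
        ∑ i, a i * (y i : ℝ)) :=
  marco_inductive_step_general n a u T t x hxsum hxu hxopt k hk0 hkmin
end

section
/- With the multiple-choice knapsack setup, suppose there exists at least one selection of weight at most T, and let τ* be the maximum weight over all selections of weight at most T. Let M ∈ ℝ be any constant strictly greater than the sum ∑_{i=1}^n ∑_{j ∈ N_i} c_{ij} of the costs of all items. Then a selection s with weight(s) ≤ T minimizes cost(s) − M · weight(s) among all selections of weight at most T if and only if weight(s) = τ* and cost(s) ≤ cost(s') for every selection s' with weight(s') = τ*. In particular, such minimizers are exactly the maximal knapsack packings of minimum cost, i.e., the optimal solutions of the Multiple-Choice Minimum-Cost Maximal Knapsack Packing Problem ((MC)²MKP). -/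
/-!
Since every selection costs between `0` and the total item cost, which is less than `M`, one
extra unit of weight lowers `cost - M * weight` by more than any difference in cost can raise
it. Minimizing `cost - M * weight` therefore first maximizes the weight and only then
minimizes the cost.
-/

theorem sub_mul_lt_sub_mul_of_lt {a a' M : ℝ} {k k' : ℕ} (hM : 0 ≤ M) (hk : k < k')
    (ha : a' < a + M) : a' - M * k' < a - M * k := by
  have hk' : (k : ℝ) + 1 ≤ k' := by exact_mod_cast hk
  nlinarith

section Scalarization

variable {α : Type*} {cost : α → ℝ} {weight : α → ℕ} {T τ : ℕ} {M : ℝ}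

theorem cost_sub_mul_weight_lt_of_weight_lt (hM : ∀ s s', cost s < cost s' + M) {s s' : α}
    (hw : weight s < weight s') :
    cost s' - M * weight s' < cost s - M * weight s :=
  sub_mul_lt_sub_mul_of_lt (by simpa using (hM s s).le) hw (hM s' s)

theorem minimizes_cost_sub_mul_weight_iff (hτmem : ∃ s, weight s ≤ T ∧ weight s = τ)
    (hτmax : ∀ s, weight s ≤ T → weight s ≤ τ) (hM : ∀ s s', cost s < cost s' + M)
    {s : α} (hs : weight s ≤ T) :
    (∀ s', weight s' ≤ T → cost s - M * weight s ≤ cost s' - M * weight s') ↔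
      (weight s = τ ∧ ∀ s', weight s' = τ → cost s ≤ cost s') := by
  constructor
  · intro hmin
    obtain ⟨s₀, hs₀T, hs₀τ⟩ := hτmem
    have hsτ : weight s = τ := by
      refine (hτmax s hs).eq_of_not_lt fun hlt => ?_
      have := cost_sub_mul_weight_lt_of_weight_lt hM (hs₀τ ▸ hlt : weight s < weight s₀)
      exact (hmin s₀ hs₀T).not_gt this
    refine ⟨hsτ, fun s' hs'τ => ?_⟩
    have := hmin s' (hs'τ.trans hsτ.symm ▸ hs)
    rw [hsτ, hs'τ] at this
    linarith
  · rintro ⟨hsτ, hmin⟩ s' hs'T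
    rcases (hτmax s' hs'T).lt_or_eq with hlt | hs'τ
    · exact (cost_sub_mul_weight_lt_of_weight_lt hM (hsτ ▸ hlt)).le
    · rw [hsτ, hs'τ]
      linarith [hmin s' hs'τ]

end Scalarization

theorem sum_apply_le_sum_sum {n : ℕ} {ι : Fin n → Type} [∀ i, Fintype (ι i)]
    {c : ∀ i, ι i → ℝ} (hc : ∀ i j, 0 ≤ c i j) (s : ∀ i, ι i) :
    ∑ i, c i (s i) ≤ ∑ i, ∑ j : ι i, c i j :=
  Finset.sum_le_sum fun i _ => Finset.single_le_sum (fun j _ => hc i j) (Finset.mem_univ (s i))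

theorem mc2mkp_objective_characterization_general
    {n : ℕ} (ι : Fin n → Type)
    [∀ i, Fintype (ι i)]
    (c : ∀ i, ι i → ℝ) (hc : ∀ (i : Fin n) (j : ι i), 0 ≤ c i j)
    (w : ∀ i, ι i → ℕ) (T : ℕ)
    (τstar : ℕ)
    (hτmem : ∃ s : ∀ i, ι i, (∑ i, w i (s i)) ≤ T ∧ (∑ i, w i (s i)) = τstar)
    (hτmax : ∀ s : ∀ i, ι i, (∑ i, w i (s i)) ≤ T → (∑ i, w i (s i)) ≤ τstar)
    (M : ℝ) (hM : (∑ i, ∑ j : ι i, c i j) < M) :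
    ∀ s : ∀ i, ι i, (∑ i, w i (s i)) ≤ T →
      ((∀ s' : ∀ i, ι i, (∑ i, w i (s' i)) ≤ T →
          (∑ i, c i (s i)) - M * ((∑ i, w i (s i) : ℕ) : ℝ) ≤
            (∑ i, c i (s' i)) - M * ((∑ i, w i (s' i) : ℕ) : ℝ)) ↔
        ((∑ i, w i (s i)) = τstar ∧
          ∀ s' : ∀ i, ι i, (∑ i, w i (s' i)) = τstar →
            (∑ i, c i (s i)) ≤ ∑ i, c i (s' i))) := by
  have hcost : ∀ s s' : ∀ i, ι i, ∑ i, c i (s i) < ∑ i, c i (s' i) + M := fun s s' => by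
    have := sum_apply_le_sum_sum hc s
    have := Finset.sum_nonneg fun i (_ : i ∈ Finset.univ) => hc i (s' i)
    linarith
  exact fun s hs => minimizes_cost_sub_mul_weight_iff hτmem hτmax hcost hs

/-- Characterization of the optimal solutions of (MC)²MKP: if some selection
has weight at most `T`, `τ*` is the maximum weight among selections of weight
at most `T`, and `M` is strictly greater than the total cost of all items,
then a selection `s` of weight at most `T` minimizes `cost(s) − M · weight(s)`
among all selections of weight at most `T` if and only if it is a maximal
knapsack packing of minimum cost, i.e. `weight(s) = τ*` and `s` has minimal
cost among selections of weight `τ*`. -/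
theorem mc2mkp_objective_characterization
    {n : ℕ} (hn : 1 ≤ n) (ι : Fin n → Type)
    [∀ i, Fintype (ι i)] [∀ i, Nonempty (ι i)]
    (c : ∀ i, ι i → ℝ) (hc : ∀ (i : Fin n) (j : ι i), 0 ≤ c i j)
    (w : ∀ i, ι i → ℕ) (T : ℕ)
    (hfeas : ∃ s : ∀ i, ι i, (∑ i, w i (s i)) ≤ T)
    (τstar : ℕ)
    (hτmem : ∃ s : ∀ i, ι i, (∑ i, w i (s i)) ≤ T ∧ (∑ i, w i (s i)) = τstar)
    (hτmax : ∀ s : ∀ i, ι i, (∑ i, w i (s i)) ≤ T → (∑ i, w i (s i)) ≤ τstar)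
    (M : ℝ) (hM : (∑ i, ∑ j : ι i, c i j) < M) :
    ∀ s : ∀ i, ι i, (∑ i, w i (s i)) ≤ T →
      ((∀ s' : ∀ i, ι i, (∑ i, w i (s' i)) ≤ T →
          (∑ i, c i (s i)) - M * ((∑ i, w i (s i) : ℕ) : ℝ) ≤
            (∑ i, c i (s' i)) - M * ((∑ i, w i (s' i) : ℕ) : ℝ)) ↔
        ((∑ i, w i (s i)) = τstar ∧
          ∀ s' : ∀ i, ι i, (∑ i, w i (s' i)) = τstar →
            (∑ i, c i (s i)) ≤ ∑ i, c i (s' i))) :=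
  mc2mkp_objective_characterization_general ι c hc w T τstar hτmem hτmax M hM
end

section
/- Consider an instance with n resources, cost functions C_i : ℕ → ℝ with C_i(j) ≥ 0, lower limits l_i, upper limits u_i with l_i ≤ u_i, and workload T with ∑_i l_i ≤ T ≤ ∑_i u_i. Form the multiple-choice knapsack instance with capacity T in which class N_i = {l_i, l_i+1, …, u_i}, and item j ∈ N_i has cost c_{ij} = C_i(j) and weight w_{ij} = j. Then the maximum weight over selections of weight at most T equals T itself, and a selection s = (s(1),…,s(n)) is an optimal solution of (MC)²MKP for this instance (a maximal packing of minimal cost) if and only if the assignment x defined by x_i := s(i) is an optimal schedule of the scheduling instance (i.e., l_i ≤ x_i ≤ u_i, ∑_i x_i = T, and ∑_i C_i(x_i) is minimal among all such assignments); moreover the optimal knapsack cost equals the optimal total schedule cost. (Transformation from the Minimal Cost FL Schedule problem to (MC)²MKP.) -/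
/-!
Every capacity between `∑ lᵢ` and `∑ uᵢ` is attained by some selection (fill the classes
greedily), so the maximal packings are exactly the selections of weight `T`, i.e. the feasible
schedules; on these the two cost-minimality conditions are literally the same.
-/

theorem Finset.exists_sum_eq_of_sum_le_of_le_sum {ι : Type*} (S : Finset ι) {l u : ι → ℕ}
    (hlu : ∀ i ∈ S, l i ≤ u i) {T : ℕ} (hl : ∑ i ∈ S, l i ≤ T) (hu : T ≤ ∑ i ∈ S, u i) :
    ∃ x : ι → ℕ, (∀ i ∈ S, x i ∈ Finset.Icc (l i) (u i)) ∧ ∑ i ∈ S, x i = T := by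
  classical
  induction S using Finset.induction_on generalizing T with
  | empty => exact ⟨l, by simp, by simpa [eq_comm] using hu⟩
  | insert a S ha ih =>
    rw [Finset.sum_insert ha] at hl hu
    have hla := hlu a (Finset.mem_insert_self a S)
    -- Give `a` as much as possible while leaving at least `∑ l` for the rest.
    obtain ⟨v, hv⟩ : ∃ v, v = min (u a) (T - ∑ i ∈ S, l i) := ⟨_, rfl⟩
    have hS : ∑ i ∈ S, l i ≤ ∑ i ∈ S, u i :=
      Finset.sum_le_sum fun i hi => hlu i (Finset.mem_insert_of_mem hi)
    have hrest_l : ∑ i ∈ S, l i ≤ T - v := by omega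
    have hrest_u : T - v ≤ ∑ i ∈ S, u i := by omega
    obtain ⟨x, hxS, hxT⟩ := ih (fun i hi => hlu i (Finset.mem_insert_of_mem hi)) hrest_l hrest_u
    refine ⟨Function.update x a v, ?_, ?_⟩
    · intro i hi
      rcases Finset.mem_insert.mp hi with rfl | hi
      · simp only [Function.update_self, Finset.mem_Icc]
        omega
      · rw [Function.update_of_ne (ne_of_mem_of_not_mem hi ha)]
        exact hxS i hi
    · rw [Finset.sum_insert ha, Function.update_self,
        Finset.sum_update_of_notMem ha, hxT]
      omega

theorem Fintype.exists_sum_eq_of_sum_le_of_le_sum {ι : Type*} [Fintype ι] {l u : ι → ℕ}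
    (hlu : ∀ i, l i ≤ u i) {T : ℕ} (hl : ∑ i, l i ≤ T) (hu : T ≤ ∑ i, u i) :
    ∃ x : ι → ℕ, (∀ i, x i ∈ Finset.Icc (l i) (u i)) ∧ ∑ i, x i = T := by
  simpa using Finset.univ.exists_sum_eq_of_sum_le_of_le_sum (fun i _ => hlu i) hl hu

theorem schedule_to_knapsack_transformation_general
    (n : ℕ) (C : Fin n → ℕ → ℝ)
    (l u : Fin n → ℕ) (hlu : ∀ i, l i ≤ u i)
    (T : ℕ) (hTl : (∑ i, l i) ≤ T) (hTu : T ≤ ∑ i, u i) :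
    -- the maximum weight over selections of weight at most T equals T
    (∃ s : Fin n → ℕ, (∀ i, s i ∈ Finset.Icc (l i) (u i)) ∧ (∑ i, s i) = T) ∧
    -- optimal (MC)²MKP solutions are exactly the optimal schedules
    (∀ s : Fin n → ℕ, (∀ i, s i ∈ Finset.Icc (l i) (u i)) →
      (((∑ i, s i) ≤ T ∧
        (∀ s' : Fin n → ℕ, (∀ i, s' i ∈ Finset.Icc (l i) (u i)) →
          (∑ i, s' i) ≤ T → (∑ i, s' i) ≤ ∑ i, s i) ∧
        (∀ s' : Fin n → ℕ, (∀ i, s' i ∈ Finset.Icc (l i) (u i)) →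
          (∑ i, s' i) = (∑ i, s i) → (∑ i, C i (s i)) ≤ ∑ i, C i (s' i))) ↔
      ((∑ i, s i) = T ∧
        ∀ y : Fin n → ℕ, (∀ i, l i ≤ y i ∧ y i ≤ u i) → (∑ i, y i) = T →
          (∑ i, C i (s i)) ≤ ∑ i, C i (y i)))) := by
  obtain ⟨s₀, hs₀, hs₀T⟩ := Fintype.exists_sum_eq_of_sum_le_of_le_sum hlu hTl hTu
  refine ⟨⟨s₀, hs₀, hs₀T⟩, fun s _ => ⟨?_, ?_⟩⟩
  · rintro ⟨hsT, hmax, hcost⟩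
    have hs : ∑ i, s i = T := le_antisymm hsT (hs₀T ▸ hmax s₀ hs₀ hs₀T.le)
    exact ⟨hs, fun y hy hyT => hcost y (fun i => Finset.mem_Icc.mpr (hy i)) (hyT.trans hs.symm)⟩
  · rintro ⟨hs, hopt⟩
    exact ⟨hs.le, fun _ _ h => hs ▸ h,
      fun s' hs' h => hopt s' (fun i => Finset.mem_Icc.mp (hs' i)) (h.trans hs)⟩

/-- Transformation from the Minimal Cost FL Schedule problem to (MC)²MKP.
With classes `N_i = {l_i, …, u_i}`, item `j ∈ N_i` of cost `C_i(j)` and weight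
`j`, and capacity `T` with `∑ l_i ≤ T ≤ ∑ u_i`: the maximum weight among
selections of weight at most `T` equals `T` (there is a selection of weight
exactly `T`), and a selection is an optimal (MC)²MKP solution — a maximal
packing (weight `≤ T`, of maximal weight among such) of minimal cost among
selections of the same weight — if and only if it is an optimal schedule
(feasible for `T` tasks with minimal total cost). -/
theorem schedule_to_knapsack_transformation
    (n : ℕ) (hn : 1 ≤ n) (C : Fin n → ℕ → ℝ) (hC : ∀ i j, 0 ≤ C i j)
    (l u : Fin n → ℕ) (hlu : ∀ i, l i ≤ u i)
    (T : ℕ) (hTl : (∑ i, l i) ≤ T) (hTu : T ≤ ∑ i, u i) :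
    -- the maximum weight over selections of weight at most T equals T
    (∃ s : Fin n → ℕ, (∀ i, s i ∈ Finset.Icc (l i) (u i)) ∧ (∑ i, s i) = T) ∧
    -- optimal (MC)²MKP solutions are exactly the optimal schedules
    (∀ s : Fin n → ℕ, (∀ i, s i ∈ Finset.Icc (l i) (u i)) →
      (((∑ i, s i) ≤ T ∧
        (∀ s' : Fin n → ℕ, (∀ i, s' i ∈ Finset.Icc (l i) (u i)) →
          (∑ i, s' i) ≤ T → (∑ i, s' i) ≤ ∑ i, s i) ∧
        (∀ s' : Fin n → ℕ, (∀ i, s' i ∈ Finset.Icc (l i) (u i)) →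
          (∑ i, s' i) = (∑ i, s i) → (∑ i, C i (s i)) ≤ ∑ i, C i (s' i))) ↔
      ((∑ i, s i) = T ∧
        ∀ y : Fin n → ℕ, (∀ i, l i ≤ y i ∧ y i ≤ u i) → (∑ i, y i) = T →
          (∑ i, C i (s i)) ≤ ∑ i, C i (y i)))) :=
  schedule_to_knapsack_transformation_general n C l u hlu T hTl hTu
end
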